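/- Let ψ be a species tree topology on X with |X| = n ≥ 2. For every population history y ∈ Y_ψ there exists a map h : I_ψ → I_ψ such that h(i) ⪰ i for every i ∈ I_ψ, h(i) ⪰ h(j) whenever i ⪰ j, and |h⁻¹(i)| = y(i) for every i ∈ I_ψ. Equivalently (identifying I_{T_M} with I_ψ), every population history for ψ lies in the image Φ_{ψ,T_M}(H_{ψ,T_M}), so the matching gene tree is compatible with every population history. -/

import Mathlib

/-!
Rooted binary trees with leaves labeled by elements of a finite label set.
Each node of a tree is identified with the subtree rooted at it; since leaf
labels are required to be distinct, this identification is faithful.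
-/

inductive RBT (α : Type) where
  | leaf (x : α)
  | node (l r : RBT α)
deriving DecidableEq

namespace RBT

variable {α : Type} [DecidableEq α]

/-- The list of leaf labels, left to right. -/
def leafList : RBT α → List α
  | leaf x => [x]
  | node l r => l.leafList ++ r.leafList

/-- The clade of a node: the set of labels of leaves descended from or equal to it. -/
def clade (t : RBT α) : Finset α := t.leafList.toFinset

/-- `t` is a rooted binary tree on the label set `X`: its leaf labels are
distinct and form exactly the set `X`. -/
def IsTreeOn (t : RBT α) (X : Finset α) : Prop :=
  t.leafList.Nodup ∧ t.clade = X

/-- All nodes of a tree, each identified with the subtree rooted at it. -/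
def subtrees : RBT α → Finset (RBT α)
  | leaf x => {leaf x}
  | node l r => insert (node l r) (subtrees l ∪ subtrees r)

/-- `Anc i j` means node `i` is ancestral to or equal to node `j`, i.e. `i ⪰ j`. -/
def Anc (i j : RBT α) : Prop := j ∈ i.subtrees

instance (i j : RBT α) : Decidable (Anc i j) :=
  inferInstanceAs (Decidable (j ∈ i.subtrees))

/-- Whether a node is internal (a non-leaf). -/
def isInternal : RBT α → Bool
  | leaf _ => false
  | node _ _ => true

/-- The internal nodes of a tree. -/
def internals (t : RBT α) : Finset (RBT α) :=
  t.subtrees.filter fun s => s.isInternal = true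

/-- A coalescent history for a gene tree `T` relative to a species tree
topology `ψ`: a map `h : I_T → I_ψ` such that the clade of `j` is contained in
the clade of `h j` for every internal node `j` of `T`, and `h i ⪰ h j` in `ψ`
whenever `i ⪰ j` in `T`. -/
def IsCoalHistory (ψ T : RBT α) (h : ↥T.internals → ↥ψ.internals) : Prop :=
  (∀ j : ↥T.internals, (j : RBT α).clade ⊆ ((h j : RBT α)).clade) ∧
  ∀ i j : ↥T.internals, Anc (i : RBT α) (j : RBT α) →
    Anc (h i : RBT α) ((h j : RBT α))

/-- The set `H_{ψ,T}` of coalescent histories for `T` relative to `ψ`. -/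
def coalHistories (ψ T : RBT α) : Set (↥T.internals → ↥ψ.internals) :=
  {h | IsCoalHistory ψ T h}

/-- The map `Φ_{ψ,T}`: from a coalescent history, record only the number of
coalescent events `|h⁻¹(i)|` occurring at each internal node `i` of `ψ`. -/
def Phi (ψ T : RBT α) (h : ↥T.internals → ↥ψ.internals) : ↥ψ.internals → ℕ :=
  fun i => (Finset.univ.filter fun j : ↥T.internals => h j = i).card

/-- A population history for `ψ`, where `n` is the number of taxa: a map
`y : I_ψ → ℕ` with total sum `n - 1` such that, for every internal node `i`,
the sum of `y` over internal nodes `j` with `i ⪰ j` is at most `ℓ_i - 1`. -/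
def IsPopHistory (ψ : RBT α) (n : ℕ) (y : ↥ψ.internals → ℕ) : Prop :=
  (∑ i : ↥ψ.internals, y i = n - 1) ∧
  ∀ i : ↥ψ.internals,
    (∑ j ∈ Finset.univ.filter
        (fun j : ↥ψ.internals => Anc (i : RBT α) (j : RBT α)), y j)
      ≤ (i : RBT α).clade.card - 1

/-- The set `Y_ψ` of population histories for `ψ` on `n` taxa. -/
def popHistories (ψ : RBT α) (n : ℕ) : Set (↥ψ.internals → ℕ) :=
  {y | IsPopHistory ψ n y}

/-- A caterpillar: a rooted binary tree whose internal nodes are totally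
ordered by the ancestry relation. -/
def IsCaterpillar (T : RBT α) : Prop :=
  ∀ i ∈ T.internals, ∀ j ∈ T.internals, Anc i j ∨ Anc j i

/-- The set of clades of a tree. -/
def cladeSet (t : RBT α) : Set (Finset α) :=
  {s | ∃ v ∈ t.subtrees, v.clade = s}

end RBT


set_option linter.unusedSectionVars false
set_option linter.unusedVariables false

namespace RBT

variable {α : Type} [DecidableEq α]

theorem leafList_ne_nil (t : RBT α) : t.leafList ≠ [] := by
  cases t with
  | leaf x => simp [leafList]
  | node l r => simp [leafList]; exact fun h _ => leafList_ne_nil l h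

theorem clade_nonempty (t : RBT α) : t.clade.Nonempty := by
  cases ht : t.leafList with
  | nil => exact absurd ht t.leafList_ne_nil
  | cons a l => exact ⟨a, by simp [clade, ht]⟩

theorem self_mem_subtrees (t : RBT α) : t ∈ t.subtrees := by
  cases t with
  | leaf x => simp [subtrees]
  | node l r => simp [subtrees]

theorem anc_refl (t : RBT α) : Anc t t := self_mem_subtrees t

theorem mem_subtrees_node {s l r : RBT α} :
    s ∈ (node l r).subtrees ↔ s = node l r ∨ s ∈ l.subtrees ∨ s ∈ r.subtrees := by
  simp [subtrees]

theorem leafList_sublist {s t : RBT α} (h : s ∈ t.subtrees) :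
    s.leafList.Sublist t.leafList := by
  induction t with
  | leaf x => simp [subtrees] at h; subst h; exact List.Sublist.refl _
  | node l r ihl ihr =>
    rcases mem_subtrees_node.mp h with h | h | h
    · subst h; exact List.Sublist.refl _
    · exact (ihl h).trans (List.sublist_append_left _ _)
    · exact (ihr h).trans (List.sublist_append_right _ _)

theorem clade_subset {s t : RBT α} (h : s ∈ t.subtrees) : s.clade ⊆ t.clade := by
  intro x hx
  simp only [clade, List.mem_toFinset] at *
  exact (leafList_sublist h).mem hx

theorem nodup_of_mem_subtrees {s t : RBT α} (h : s ∈ t.subtrees)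
    (hnd : t.leafList.Nodup) : s.leafList.Nodup :=
  (leafList_sublist h).nodup hnd

theorem subtrees_subset {s t : RBT α} (h : s ∈ t.subtrees) :
    s.subtrees ⊆ t.subtrees := by
  induction t with
  | leaf x => simp [subtrees] at h; subst h; exact fun _ h => h
  | node l r ihl ihr =>
    rcases mem_subtrees_node.mp h with h | h | h
    · subst h; exact fun _ h => h
    · exact (ihl h).trans (fun x hx => mem_subtrees_node.mpr (Or.inr (Or.inl hx)))
    · exact (ihr h).trans (fun x hx => mem_subtrees_node.mpr (Or.inr (Or.inr hx)))

theorem anc_trans {a b c : RBT α} (h1 : Anc a b) (h2 : Anc b c) : Anc a c :=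
  subtrees_subset h1 h2

theorem card_clade_le {s t : RBT α} (h : s ∈ t.subtrees) :
    s.clade.card ≤ t.clade.card :=
  Finset.card_le_card (clade_subset h)

theorem clade_node (l r : RBT α) : (node l r).clade = l.clade ∪ r.clade := by
  simp [clade, leafList]

theorem disjoint_clade_of_nodup {l r : RBT α}
    (hnd : (node l r).leafList.Nodup) : Disjoint l.clade r.clade := by
  simp only [leafList, List.nodup_append'] at hnd
  rw [Finset.disjoint_left]
  intro a hal har
  simp only [clade, List.mem_toFinset] at hal har
  exact hnd.2.2 hal har

theorem card_clade_left_lt {l r : RBT α} (hnd : (node l r).leafList.Nodup) :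
    l.clade.card < (node l r).clade.card := by
  rw [clade_node, Finset.card_union_of_disjoint (disjoint_clade_of_nodup hnd)]
  have := r.clade_nonempty
  exact Nat.lt_add_of_pos_right (Finset.card_pos.mpr this)

theorem card_clade_right_lt {l r : RBT α} (hnd : (node l r).leafList.Nodup) :
    r.clade.card < (node l r).clade.card := by
  rw [clade_node, Finset.card_union_of_disjoint (disjoint_clade_of_nodup hnd)]
  have := l.clade_nonempty
  exact Nat.lt_add_of_pos_left (Finset.card_pos.mpr this)

theorem node_not_mem_left {l r : RBT α} (hnd : (node l r).leafList.Nodup) :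
    node l r ∉ l.subtrees := fun h =>
  absurd (card_clade_le h) (Nat.not_le.mpr (card_clade_left_lt hnd))

theorem node_not_mem_right {l r : RBT α} (hnd : (node l r).leafList.Nodup) :
    node l r ∉ r.subtrees := fun h =>
  absurd (card_clade_le h) (Nat.not_le.mpr (card_clade_right_lt hnd))

theorem disjoint_subtrees {l r : RBT α} (hnd : (node l r).leafList.Nodup) :
    ∀ s, s ∈ l.subtrees → s ∈ r.subtrees → False := by
  intro s hl hr
  obtain ⟨a, ha⟩ := s.clade_nonempty
  exact Finset.disjoint_left.mp (disjoint_clade_of_nodup hnd)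
    (clade_subset hl ha) (clade_subset hr ha)

theorem mem_internals {s t : RBT α} :
    s ∈ t.internals ↔ s ∈ t.subtrees ∧ s.isInternal = true := by
  simp [internals]

theorem internals_leaf (x : α) : (leaf x : RBT α).internals = ∅ := by
  simp [internals, subtrees]
  rfl

theorem internals_node (l r : RBT α) :
    (node l r).internals = insert (node l r) (l.internals ∪ r.internals) := by
  ext s
  simp only [mem_internals, mem_subtrees_node, Finset.mem_insert, Finset.mem_union]
  constructor
  · rintro ⟨h | h | h, hi⟩
    · exact Or.inl h
    · exact Or.inr (Or.inl ⟨h, hi⟩)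
    · exact Or.inr (Or.inr ⟨h, hi⟩)
  · rintro (h | ⟨h, hi⟩ | ⟨h, hi⟩)
    · exact ⟨Or.inl h, by subst h; rfl⟩
    · exact ⟨Or.inr (Or.inl h), hi⟩
    · exact ⟨Or.inr (Or.inr h), hi⟩

theorem internals_subset_subtrees (t : RBT α) : t.internals ⊆ t.subtrees :=
  fun _ h => (mem_internals.mp h).1

theorem internals_mono {s t : RBT α} (h : s ∈ t.subtrees) :
    s.internals ⊆ t.internals := fun x hx =>
  mem_internals.mpr ⟨subtrees_subset h (mem_internals.mp hx).1, (mem_internals.mp hx).2⟩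

theorem card_internals {t : RBT α} (hnd : t.leafList.Nodup) :
    t.internals.card = t.clade.card - 1 := by
  induction t with
  | leaf x => simp [internals_leaf, clade, leafList]
  | node l r ihl ihr =>
    have hndl : l.leafList.Nodup := by
      simp only [leafList, List.nodup_append] at hnd; exact hnd.1
    have hndr : r.leafList.Nodup := by
      simp only [leafList, List.nodup_append] at hnd; exact hnd.2.1
    have hdisj : ∀ s, s ∈ l.subtrees → s ∈ r.subtrees → False := disjoint_subtrees hnd
    have hdisjI : Disjoint l.internals r.internals := by
      rw [Finset.disjoint_left]
      intro s hs hs'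
      exact hdisj s (internals_subset_subtrees l hs) (internals_subset_subtrees r hs')
    have hnotmem : node l r ∉ l.internals ∪ r.internals := by
      rw [Finset.mem_union]
      rintro (h | h)
      · exact node_not_mem_left hnd (internals_subset_subtrees l h)
      · exact node_not_mem_right hnd (internals_subset_subtrees r h)
    rw [internals_node, Finset.card_insert_of_notMem hnotmem,
      Finset.card_union_of_disjoint hdisjI, ihl hndl, ihr hndr,
      clade_node, Finset.card_union_of_disjoint (disjoint_clade_of_nodup hnd)]
    have h1 := Finset.card_pos.mpr l.clade_nonempty
    have h2 := Finset.card_pos.mpr r.clade_nonempty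
    omega

end RBT


namespace RBT

variable {α : Type} [DecidableEq α]

theorem not_anc_of_mem_left {l r a : RBT α} (hnd : (node l r).leafList.Nodup)
    (ha : a ∈ l.subtrees) : ¬ Anc a (node l r) := fun h =>
  node_not_mem_left hnd (subtrees_subset ha h)

theorem not_anc_of_mem_right {l r a : RBT α} (hnd : (node l r).leafList.Nodup)
    (ha : a ∈ r.subtrees) : ¬ Anc a (node l r) := fun h =>
  node_not_mem_right hnd (subtrees_subset ha h)

theorem not_anc_cross_lr {l r a b : RBT α} (hnd : (node l r).leafList.Nodup)
    (ha : a ∈ l.subtrees) (hb : b ∈ r.subtrees) : ¬ Anc a b := fun h =>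
  disjoint_subtrees hnd b (subtrees_subset ha h) hb

theorem not_anc_cross_rl {l r a b : RBT α} (hnd : (node l r).leafList.Nodup)
    (ha : a ∈ l.subtrees) (hb : b ∈ r.subtrees) : ¬ Anc b a := fun h =>
  disjoint_subtrees hnd a ha (subtrees_subset hb h)

/-- Greedy construction of an assignment realizing a population history on the
matching gene tree: returns the list of (node, assigned population) pairs
together with the list of not-yet-assigned internal nodes. -/
def assign (y : RBT α → ℕ) : RBT α → List (RBT α × RBT α) × List (RBT α)
  | leaf _ => ([], [])
  | node l r =>
    let pl := assign y l
    let pr := assign y r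
    let U' := node l r :: (pl.2 ++ pr.2)
    let k := U'.length - y (node l r)
    ((U'.drop k).map (fun u => (u, node l r)) ++ pl.1 ++ pr.1, U'.take k)

/-- The invariants of `assign`. -/
structure AssignSpec (y : RBT α → ℕ) (t : RBT α)
    (A : List (RBT α × RBT α)) (U : List (RBT α)) : Prop where
  nodup : (A.map Prod.fst ++ U).Nodup
  keys : (A.map Prod.fst ++ U).toFinset = t.internals
  targets : ∀ p ∈ A, p.2 ∈ t.internals ∧ Anc p.2 p.1
  counts : ∀ i ∈ t.internals, (A.filter (fun p => p.2 = i)).length = y i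
  mono : ∀ p ∈ A, ∀ q ∈ A, Anc p.1 q.1 → Anc p.2 q.2
  upper : ∀ u ∈ U, ∀ v ∈ t.internals, Anc v u → v ∈ U
  pw : U.Pairwise fun a b => ¬ Anc b a
  len : U.length + ∑ j ∈ t.internals, y j = t.internals.card

theorem assign_spec (y : RBT α → ℕ) : ∀ (t : RBT α), t.leafList.Nodup →
    (∀ s ∈ t.subtrees, ∑ j ∈ s.internals, y j < s.clade.card) →
    AssignSpec y t (assign y t).1 (assign y t).2 := by
  intro t
  induction t with
  | leaf x =>
    intro _ _
    refine ⟨?_, ?_, ?_, ?_, ?_, ?_, ?_, ?_⟩ <;> simp [assign, internals_leaf]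
  | node l r ihl ihr =>
    intro hnd hy
    have hl_mem : l ∈ (node l r).subtrees :=
      mem_subtrees_node.mpr (Or.inr (Or.inl (self_mem_subtrees l)))
    have hr_mem : r ∈ (node l r).subtrees :=
      mem_subtrees_node.mpr (Or.inr (Or.inr (self_mem_subtrees r)))
    have hndl : l.leafList.Nodup := nodup_of_mem_subtrees hl_mem hnd
    have hndr : r.leafList.Nodup := nodup_of_mem_subtrees hr_mem hnd
    have Hl := ihl hndl (fun s hs => hy s (subtrees_subset hl_mem hs))
    have Hr := ihr hndr (fun s hs => hy s (subtrees_subset hr_mem hs))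
    set Al := (assign y l).1 with hAldef
    set Ul := (assign y l).2 with hUldef
    set Ar := (assign y r).1 with hArdef
    set Ur := (assign y r).2 with hUrdef
    set U' : List (RBT α) := node l r :: (Ul ++ Ur) with hU'def
    set k : ℕ := U'.length - y (node l r) with hkdef
    have hassign : assign y (node l r) =
        ((U'.drop k).map (fun u => (u, node l r)) ++ Al ++ Ar, U'.take k) := rfl
    rw [hassign]
    -- membership helpers
    have memUl : ∀ u ∈ Ul, u ∈ l.internals := fun u hu =>
      Hl.keys ▸ List.mem_toFinset.mpr (List.mem_append_right _ hu)
    have memUr : ∀ u ∈ Ur, u ∈ r.internals := fun u hu =>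
      Hr.keys ▸ List.mem_toFinset.mpr (List.mem_append_right _ hu)
    have memKl : ∀ p ∈ Al, p.1 ∈ l.internals := fun p hp =>
      Hl.keys ▸ List.mem_toFinset.mpr
        (List.mem_append_left _ (List.mem_map_of_mem (f := Prod.fst) hp))
    have memKr : ∀ p ∈ Ar, p.1 ∈ r.internals := fun p hp =>
      Hr.keys ▸ List.mem_toFinset.mpr
        (List.mem_map_of_mem (f := Prod.fst) hp |> List.mem_append_left _)
    have subl : ∀ s ∈ l.internals, s ∈ l.subtrees := internals_subset_subtrees l
    have subr : ∀ s ∈ r.internals, s ∈ r.subtrees := internals_subset_subtrees r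
    -- nodup structure of children results
    have hKUl := List.nodup_append'.mp Hl.nodup
    have hKUr := List.nodup_append'.mp Hr.nodup
    -- the node is not among the children nodes
    have hnotl : ∀ s ∈ l.internals, s ≠ node l r := by
      intro s hs hcontra; subst hcontra
      exact node_not_mem_left hnd (subl _ hs)
    have hnotr : ∀ s ∈ r.internals, s ≠ node l r := by
      intro s hs hcontra; subst hcontra
      exact node_not_mem_right hnd (subr _ hs)
    have hdisjlr : ∀ s ∈ l.internals, s ∉ r.internals := by
      intro s hs hs'
      exact disjoint_subtrees hnd s (subl _ hs) (subr _ hs')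
    -- numeric facts
    have hcll : 1 ≤ l.clade.card := Finset.card_pos.mpr l.clade_nonempty
    have hclr : 1 ≤ r.clade.card := Finset.card_pos.mpr r.clade_nonempty
    have hcil : l.internals.card = l.clade.card - 1 := card_internals hndl
    have hcir : r.internals.card = r.clade.card - 1 := card_internals hndr
    have hcit : (node l r).internals.card = l.clade.card + r.clade.card - 1 := by
      rw [card_internals hnd, clade_node,
        Finset.card_union_of_disjoint (disjoint_clade_of_nodup hnd)]
    have hsumt : ∑ j ∈ (node l r).internals, y j =
        y (node l r) + (∑ j ∈ l.internals, y j + ∑ j ∈ r.internals, y j) := by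
      rw [internals_node, Finset.sum_insert, Finset.sum_union]
      · rw [Finset.disjoint_left]; exact hdisjlr
      · rw [Finset.mem_union]
        rintro (h | h)
        · exact hnotl _ h rfl
        · exact hnotr _ h rfl
    have hyt : ∑ j ∈ (node l r).internals, y j < (node l r).clade.card :=
      hy _ (self_mem_subtrees _)
    have hclt : (node l r).clade.card = l.clade.card + r.clade.card := by
      rw [clade_node, Finset.card_union_of_disjoint (disjoint_clade_of_nodup hnd)]
    have hm : U'.length = 1 + (Ul.length + Ur.length) := by
      rw [hU'def]; simp [Nat.add_comm]
    have hky : y (node l r) + k = U'.length := by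
      have h1 := Hl.len
      have h2 := Hr.len
      rw [hclt, hsumt] at hyt
      omega
    have hdroplen : (U'.drop k).length = y (node l r) := by
      rw [List.length_drop]; omega
    have htakelen : (U'.take k).length = k := by
      rw [List.length_take]; omega
    -- nodup of U'
    have hU'nodup : U'.Nodup := by
      rw [hU'def, List.nodup_cons, List.nodup_append']
      refine ⟨?_, hKUl.2.1, hKUr.2.1, ?_⟩
      · intro hmem
        rcases List.mem_append.mp hmem with h | h
        · exact hnotl _ (memUl _ h) rfl
        · exact hnotr _ (memUr _ h) rfl
      · intro a ha hb
        exact hdisjlr a (memUl _ ha) (memUr _ hb)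
    -- pairwise: no later element of U' is an ancestor of an earlier one
    have hU'pw : U'.Pairwise fun a b => ¬ Anc b a := by
      rw [hU'def, List.pairwise_cons, List.pairwise_append]
      refine ⟨?_, Hl.pw, Hr.pw, ?_⟩
      · intro u hu
        rcases List.mem_append.mp hu with h | h
        · exact not_anc_of_mem_left hnd (subl _ (memUl _ h))
        · exact not_anc_of_mem_right hnd (subr _ (memUr _ h))
      · intro a ha b hb
        exact not_anc_cross_rl hnd (subl _ (memUl _ ha)) (subr _ (memUr _ hb))
    have hU'key := List.take_append_drop k U'
    have hsumM : (↑(U'.take k) : Multiset (RBT α)) + ↑(U'.drop k) =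
        {node l r} + ((↑Ul : Multiset (RBT α)) + ↑Ur) := by
      rw [Multiset.coe_add, hU'key, hU'def, Multiset.singleton_add]
      simp
    have hKeq : (((U'.drop k).map (fun u => (u, node l r)) ++ Al ++ Ar).map
          Prod.fst) = (U'.drop k ++ (Al.map Prod.fst ++ Ar.map Prod.fst)) := by
      have hidm : List.map (Prod.fst ∘ fun u : RBT α => (u, node l r)) U' = U' := by
        rw [show (Prod.fst ∘ fun u : RBT α => (u, node l r)) = id from rfl, List.map_id]
      simp [hidm]
    have hperm : ((((U'.drop k).map (fun u => (u, node l r)) ++ Al ++ Ar).map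
          Prod.fst ++ U'.take k)).Perm
        (node l r :: ((Al.map Prod.fst ++ Ul) ++ (Ar.map Prod.fst ++ Ur))) := by
      rw [← Multiset.coe_eq_coe, hKeq]
      simp only [← Multiset.coe_add, ← Multiset.cons_coe, ← Multiset.singleton_add]
      calc (↑(U'.drop k) + ((↑(Al.map Prod.fst) : Multiset (RBT α))
                + ↑(Ar.map Prod.fst))) + ↑(U'.take k)
          = (↑(U'.take k) + ↑(U'.drop k)) + ((↑(Al.map Prod.fst) : Multiset (RBT α))
                + ↑(Ar.map Prod.fst)) := by abel
        _ = ({node l r} + ((↑Ul : Multiset (RBT α)) + ↑Ur))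
              + ((↑(Al.map Prod.fst) : Multiset (RBT α)) + ↑(Ar.map Prod.fst)) := by
            rw [hsumM]
        _ = {node l r} + ((↑(Al.map Prod.fst) + ↑Ul : Multiset (RBT α))
              + (↑(Ar.map Prod.fst) + ↑Ur)) := by abel
    have hRnodup : (node l r :: ((Al.map Prod.fst ++ Ul) ++
        (Ar.map Prod.fst ++ Ur))).Nodup := by
      rw [List.nodup_cons, List.nodup_append']
      refine ⟨?_, ⟨Hl.nodup, Hr.nodup, ?_⟩⟩
      · intro hmem
        rcases List.mem_append.mp hmem with h | h
        · exact hnotl _ (Hl.keys ▸ List.mem_toFinset.mpr h) rfl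
        · exact hnotr _ (Hr.keys ▸ List.mem_toFinset.mpr h) rfl
      · intro a ha hb
        exact hdisjlr a (Hl.keys ▸ List.mem_toFinset.mpr ha)
          (Hr.keys ▸ List.mem_toFinset.mpr hb)
    -- keys of children cannot be ancestors of elements of U'
    have hkeyU : ∀ p : RBT α × RBT α, (p ∈ Al ∨ p ∈ Ar) → ∀ u ∈ U', ¬ Anc p.1 u := by
      intro p hp u hu hanc
      rw [hU'def] at hu
      rcases List.mem_cons.mp hu with rfl | hu
      · rcases hp with hp | hp
        · exact not_anc_of_mem_left hnd (subl _ (memKl p hp)) hanc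
        · exact not_anc_of_mem_right hnd (subr _ (memKr p hp)) hanc
      · rcases List.mem_append.mp hu with hu | hu
        · rcases hp with hp | hp
          · exact hKUl.2.2 (List.mem_map_of_mem (f := Prod.fst) hp)
              (Hl.upper u hu p.1 (memKl p hp) hanc)
          · exact not_anc_cross_rl hnd (subl _ (memUl _ hu)) (subr _ (memKr p hp)) hanc
        · rcases hp with hp | hp
          · exact not_anc_cross_lr hnd (subl _ (memKl p hp)) (subr _ (memUr _ hu)) hanc
          · exact hKUr.2.2 (List.mem_map_of_mem (f := Prod.fst) hp)
              (Hr.upper u hu p.1 (memKr p hp) hanc)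
    have hfilter0 : ∀ (L : List (RBT α × RBT α)) (i : RBT α),
        (∀ p ∈ L, p.2 ≠ i) → (L.filter (fun p => p.2 = i)).length = 0 := by
      intro L i hL
      rw [List.length_eq_zero_iff, List.filter_eq_nil_iff]
      intro p hp
      simp only [decide_eq_true_eq]
      exact hL p hp
    refine ⟨?_, ?_, ?_, ?_, ?_, ?_, ?_, ?_⟩
    · -- nodup
      exact hperm.nodup_iff.mpr hRnodup
    · -- keys
      have h1 : (((U'.drop k).map (fun u => (u, node l r)) ++ Al ++ Ar).map
          Prod.fst ++ U'.take k).toFinset =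
          (node l r :: ((Al.map Prod.fst ++ Ul) ++ (Ar.map Prod.fst ++ Ur))).toFinset :=
        Finset.ext fun a => by
          simp only [List.mem_toFinset, hperm.mem_iff]
      rw [h1, List.toFinset_cons, List.toFinset_append, Hl.keys, Hr.keys, internals_node]
    · -- targets
      intro p hp
      rcases List.mem_append.mp hp with hp' | hp'
      · rcases List.mem_append.mp hp' with hp'' | hp''
        · obtain ⟨u, hu, rfl⟩ := List.mem_map.mp hp''
          have hu' : u ∈ U' := List.mem_of_mem_drop hu
          refine ⟨mem_internals.mpr ⟨self_mem_subtrees _, rfl⟩, ?_⟩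
          rw [hU'def] at hu'
          rcases List.mem_cons.mp hu' with rfl | h
          · exact anc_refl _
          · rcases List.mem_append.mp h with h | h
            · exact subtrees_subset hl_mem (subl _ (memUl _ h))
            · exact subtrees_subset hr_mem (subr _ (memUr _ h))
        · exact ⟨internals_mono hl_mem (Hl.targets p hp'').1, (Hl.targets p hp'').2⟩
      · exact ⟨internals_mono hr_mem (Hr.targets p hp').1, (Hr.targets p hp').2⟩
    · -- counts
      intro i hi
      simp only [List.filter_append, List.length_append]
      rw [internals_node] at hi
      rcases Finset.mem_insert.mp hi with rfl | hi'
      · have h1 : ((U'.drop k).map (fun u => (u, node l r))).filter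
            (fun p => p.2 = node l r) = (U'.drop k).map (fun u => (u, node l r)) := by
          rw [List.filter_eq_self]
          intro p hp
          obtain ⟨u, hu, rfl⟩ := List.mem_map.mp hp
          simp
        have h2 := hfilter0 Al (node l r) (fun p hp => hnotl _ (Hl.targets p hp).1)
        have h3 := hfilter0 Ar (node l r) (fun p hp => hnotr _ (Hr.targets p hp).1)
        rw [h1, h2, h3, List.length_map, hdroplen]
        omega
      · have h1 : (((U'.drop k).map (fun u => (u, node l r))).filter
            (fun p => p.2 = i)).length = 0 := by
          apply hfilter0
          intro p hp
          obtain ⟨u, hu, rfl⟩ := List.mem_map.mp hp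
          rcases Finset.mem_union.mp hi' with h | h
          · exact fun hc => hnotl _ h hc.symm
          · exact fun hc => hnotr _ h hc.symm
        rcases Finset.mem_union.mp hi' with h | h
        · have h3 := hfilter0 Ar i (fun p hp hc => hdisjlr i h (hc ▸ (Hr.targets p hp).1))
          rw [h1, h3, Hl.counts i h]
          omega
        · have h2 := hfilter0 Al i
            (fun p hp hc => hdisjlr _ (hc ▸ (Hl.targets p hp).1) h)
          rw [h1, h2, Hr.counts i h]
          omega
    · -- mono
      intro p hp q hq hanc
      rcases List.mem_append.mp hq with hq' | hq'
      · rcases List.mem_append.mp hq' with hq'' | hq''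
        · -- q is new: q.2 = node l r
          obtain ⟨u, hu, rfl⟩ := List.mem_map.mp hq''
          rcases List.mem_append.mp hp with hp' | hp'
          · rcases List.mem_append.mp hp' with hp'' | hp''
            · obtain ⟨w, hw, rfl⟩ := List.mem_map.mp hp''
              exact anc_refl _
            · exact absurd hanc
                (hkeyU p (Or.inl hp'') u (List.mem_of_mem_drop hu))
          · exact absurd hanc (hkeyU p (Or.inr hp') u (List.mem_of_mem_drop hu))
        · -- q old, in Al : q.2 ∈ internals l
          rcases List.mem_append.mp hp with hp' | hp'
          · rcases List.mem_append.mp hp' with hp'' | hp''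
            · obtain ⟨w, hw, rfl⟩ := List.mem_map.mp hp''
              exact subtrees_subset hl_mem (subl _ (Hl.targets q hq'').1)
            · exact Hl.mono p hp'' q hq'' hanc
          · exact absurd hanc (not_anc_cross_rl hnd (subl _ (memKl q hq''))
              (subr _ (memKr p hp')))
      · -- q old, in Ar
        rcases List.mem_append.mp hp with hp' | hp'
        · rcases List.mem_append.mp hp' with hp'' | hp''
          · obtain ⟨w, hw, rfl⟩ := List.mem_map.mp hp''
            exact subtrees_subset hr_mem (subr _ (Hr.targets q hq').1)
          · exact absurd hanc (not_anc_cross_lr hnd (subl _ (memKl p hp''))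
              (subr _ (memKr q hq')))
        · exact Hr.mono p hp' q hq' hanc
    · -- upper
      intro u hu v hv hanc
      have hpos : ∀ a ∈ U'.take k, ∀ b ∈ U'.drop k, ¬ Anc b a := by
        have hpw := hU'pw
        rw [← hU'key, List.pairwise_append] at hpw
        exact hpw.2.2
      rw [internals_node] at hv
      rcases Finset.mem_insert.mp hv with rfl | hv'
      · have hk1 : k ≠ 0 := by
          rintro hk0
          rw [hk0] at hu
          simp at hu
        obtain ⟨k', hk'⟩ := Nat.exists_eq_succ_of_ne_zero hk1
        rw [hk', hU'def, List.take_succ_cons]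
        exact List.mem_cons_self
      · have huU' : u ∈ U' := List.mem_of_mem_take hu
        have hvU' : v ∈ U' := by
          rw [hU'def] at huU' ⊢
          rcases Finset.mem_union.mp hv' with hv2 | hv2
          · rcases List.mem_cons.mp huU' with rfl | hu'
            · exact absurd hanc (not_anc_of_mem_left hnd (subl _ hv2))
            · rcases List.mem_append.mp hu' with hu' | hu'
              · exact List.mem_cons.mpr (Or.inr (List.mem_append_left _
                  (Hl.upper u hu' v hv2 hanc)))
              · exact absurd hanc (not_anc_cross_lr hnd (subl _ hv2)
                  (subr _ (memUr _ hu')))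
          · rcases List.mem_cons.mp huU' with rfl | hu'
            · exact absurd hanc (not_anc_of_mem_right hnd (subr _ hv2))
            · rcases List.mem_append.mp hu' with hu' | hu'
              · exact absurd hanc (not_anc_cross_rl hnd (subl _ (memUl _ hu'))
                  (subr _ hv2))
              · exact List.mem_cons.mpr (Or.inr (List.mem_append_right _
                  (Hr.upper u hu' v hv2 hanc)))
        rw [← hU'key] at hvU'
        rcases List.mem_append.mp hvU' with h | h
        · exact h
        · exact absurd hanc (hpos u hu v h)
    · -- pw
      exact List.Pairwise.sublist (List.take_sublist _ _) hU'pw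
    · -- len
      rw [htakelen, hsumt, hcit]
      have h1 := Hl.len
      have h2 := Hr.len
      rw [hcil] at h1
      rw [hcir] at h2
      omega

end RBT

/-- Every population history `y ∈ Y_ψ` is realized by some
coalescent history for the matching gene tree: there is `h : I_ψ → I_ψ` with
`h i ⪰ i`, `h i ⪰ h j` whenever `i ⪰ j`, and `|h⁻¹(i)| = y i` for all `i`;
equivalently, `y` lies in the image `Φ_{ψ,T_M}(H_{ψ,T_M})`. -/
theorem matching_compatible_with_every_popHistory
    {α : Type} [DecidableEq α] (X : Finset α) (n : ℕ)
    (hn : X.card = n) (h2 : 2 ≤ n)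
    (ψ : RBT α) (hψ : ψ.IsTreeOn X)
    (y : ↥ψ.internals → ℕ) (hy : RBT.IsPopHistory ψ n y) :
    (∃ h : ↥ψ.internals → ↥ψ.internals,
      (∀ i : ↥ψ.internals, RBT.Anc (h i : RBT α) (i : RBT α)) ∧
      (∀ i j : ↥ψ.internals, RBT.Anc (i : RBT α) (j : RBT α) →
        RBT.Anc (h i : RBT α) (h j : RBT α)) ∧
      RBT.Phi ψ ψ h = y) ∧
    y ∈ RBT.Phi ψ ψ '' RBT.coalHistories ψ ψ := by
  classical
  obtain ⟨hy1, hy2⟩ := hy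
  obtain ⟨hnodup, hclade⟩ := hψ
  set y' : RBT α → ℕ := fun s => if hs : s ∈ ψ.internals then y ⟨s, hs⟩ else 0
    with hy'def
  have hy'val : ∀ j : ↥ψ.internals, y' (j : RBT α) = y j := by
    intro j
    rw [hy'def]
    simp
  have hident : ∀ (s : RBT α), s ∈ ψ.subtrees →
      ∑ j ∈ s.internals, y' j =
      ∑ j ∈ Finset.univ.filter (fun j : ↥ψ.internals => RBT.Anc s (j : RBT α)), y j := by
    intro s hs
    have hfe : s.internals = ψ.internals.filter (fun j => RBT.Anc s j) := by
      ext j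
      simp only [Finset.mem_filter, RBT.mem_internals]
      constructor
      · rintro ⟨h1, h2⟩
        exact ⟨⟨RBT.subtrees_subset hs h1, h2⟩, h1⟩
      · rintro ⟨⟨_, h2⟩, h3⟩
        exact ⟨h3, h2⟩
    rw [hfe, Finset.sum_filter, Finset.univ_eq_attach, Finset.sum_filter,
      ← Finset.sum_attach (ψ.internals) (fun j => if RBT.Anc s j then y' j else 0)]
    apply Finset.sum_congr rfl
    intro j _
    by_cases h : RBT.Anc s (j : RBT α)
    · rw [if_pos h, if_pos h, hy'val]
    · rw [if_neg h, if_neg h]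
  have htot : ∑ j ∈ ψ.internals, y' j = n - 1 := by
    rw [hident ψ (RBT.self_mem_subtrees ψ), ← hy1]
    apply Finset.sum_congr ?_ (fun _ _ => rfl)
    apply Finset.filter_true_of_mem
    intro j _
    exact (RBT.mem_internals.mp j.2).1
  have hkey : ∀ s ∈ ψ.subtrees, ∑ j ∈ s.internals, y' j < s.clade.card := by
    intro s hs
    cases s with
    | leaf x => simp [RBT.internals_leaf, RBT.clade, RBT.leafList]
    | node sl sr =>
      have hsmem : RBT.node sl sr ∈ ψ.internals := RBT.mem_internals.mpr ⟨hs, rfl⟩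
      have h2' := hy2 ⟨RBT.node sl sr, hsmem⟩
      rw [← hident _ hs] at h2'
      have h2'' : ∑ j ∈ (RBT.node sl sr).internals, y' j ≤
          (RBT.node sl sr).clade.card - 1 := h2'
      have hpos := Finset.card_pos.mpr (RBT.node sl sr).clade_nonempty
      omega
  have spec := RBT.assign_spec y' ψ hnodup hkey
  set A := (RBT.assign y' ψ).1 with hAdef
  set U := (RBT.assign y' ψ).2 with hUdef
  have hcintψ : ψ.internals.card = n - 1 := by
    rw [RBT.card_internals hnodup, hclade, hn]
  have hUnil : U = [] := by
    have hlen := spec.len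
    rw [htot, hcintψ] at hlen
    rw [← List.length_eq_zero_iff]
    omega
  have hkeys : (A.map Prod.fst).toFinset = ψ.internals := by
    have h := spec.keys
    rw [hUnil, List.append_nil] at h
    exact h
  have hknodup : (A.map Prod.fst).Nodup := by
    have h := spec.nodup
    rw [hUnil, List.append_nil] at h
    exact h
  have hpair : ∀ j : ↥ψ.internals, ∃ p, p ∈ A ∧ p.1 = (j : RBT α) := by
    intro j
    have hj : (j : RBT α) ∈ (A.map Prod.fst).toFinset := by
      rw [hkeys]
      exact j.2
    rw [List.mem_toFinset] at hj
    obtain ⟨p, hp, he⟩ := List.mem_map.mp hj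
    exact ⟨p, hp, he⟩
  have huniq : ∀ p ∈ A, ∀ q ∈ A, p.1 = q.1 → p = q :=
    fun p hp q hq he => List.inj_on_of_nodup_map hknodup hp hq he
  choose P hPmem hPfst using hpair
  have hPint : ∀ j, (P j).2 ∈ ψ.internals := fun j => (spec.targets _ (hPmem j)).1
  set h : ↥ψ.internals → ↥ψ.internals := fun j => ⟨(P j).2, hPint j⟩ with hhdef
  have hanc : ∀ i : ↥ψ.internals, RBT.Anc ((h i : ↥ψ.internals) : RBT α) (i : RBT α) := by
    intro i
    have := (spec.targets _ (hPmem i)).2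
    rw [hPfst i] at this
    exact this
  have hmono : ∀ i j : ↥ψ.internals, RBT.Anc (i : RBT α) (j : RBT α) →
      RBT.Anc ((h i : ↥ψ.internals) : RBT α) ((h j : ↥ψ.internals) : RBT α) := by
    intro i j hij
    refine spec.mono (P i) (hPmem i) (P j) (hPmem j) ?_
    rw [hPfst i, hPfst j]
    exact hij
  have hAnodup : A.Nodup := List.Nodup.of_map Prod.fst hknodup
  have hphi : RBT.Phi ψ ψ h = y := by
    funext i
    have hcount := spec.counts (i : RBT α) i.2
    rw [hy'val] at hcount
    rw [RBT.Phi, ← hcount]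
    have hfn : (A.filter (fun p => p.2 = (i : RBT α))).length =
        ((A.filter (fun p => p.2 = (i : RBT α))).toFinset).card :=
      (List.toFinset_card_of_nodup (hAnodup.filter _)).symm
    rw [hfn]
    apply Finset.card_bij (fun j _ => P j)
    · intro j hj
      rw [Finset.mem_filter] at hj
      have h2 : (P j).2 = (i : RBT α) := congrArg Subtype.val hj.2
      simp only [List.mem_toFinset, List.mem_filter]
      exact ⟨hPmem j, by simp [h2]⟩
    · intro j _ j' _ he
      apply Subtype.ext
      rw [← hPfst j, ← hPfst j', he]
    · intro p hp
      simp only [List.mem_toFinset, List.mem_filter, decide_eq_true_eq] at hp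
      have hp1 : p.1 ∈ ψ.internals := by
        rw [← hkeys, List.mem_toFinset]
        exact List.mem_map_of_mem (f := Prod.fst) hp.1
      refine ⟨⟨p.1, hp1⟩, ?_, ?_⟩
      · have hPeq : P ⟨p.1, hp1⟩ = p :=
          huniq _ (hPmem ⟨p.1, hp1⟩) p hp.1 (hPfst ⟨p.1, hp1⟩)
        rw [Finset.mem_filter]
        refine ⟨Finset.mem_univ _, ?_⟩
        apply Subtype.ext
        show (P ⟨p.1, hp1⟩).2 = (i : RBT α)
        rw [hPeq, hp.2]
      · exact huniq _ (hPmem ⟨p.1, hp1⟩) p hp.1 (hPfst ⟨p.1, hp1⟩)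
  refine ⟨⟨h, hanc, hmono, hphi⟩, ⟨h, ⟨?_, hmono⟩, hphi⟩⟩
  intro j
  exact RBT.clade_subset (hanc j)
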